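/- For every k ≥ 6, every non-trivial sub-k-graph of G*_k with at least two vertices has an involution, i.e. a non-identity automorphism φ with φ∘φ = id. -/

import Mathlib

/-!
If all edges survive, the sub-k-graph is `G*_k` itself. If `M*` is removed but every interval
`M_i` survives, the reflection `v_i ↦ v_{2k-i}` is an involution. Otherwise some interval `M_m` is
missing. The only intervals separating consecutive vertices `v, v + 1` are those starting at
`v + 1` or ending at `v`, so a pair of consecutive vertices lying in a surviving edge, chosen next
to `M_m` and not separated by `M*`, is swapped by an involution.
-/

open Finset

def HasInvolution {α : Type*} [DecidableEq α] (X' : Finset α) (M' : Finset (Finset α)) : Prop :=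
  ∃ φ : Equiv.Perm α, φ ≠ 1 ∧ φ * φ = 1 ∧ (∀ x, x ∉ X' → φ x = x) ∧
    ∀ E : Finset α, E ∈ M' ↔ E.image ⇑φ ∈ M'

section Involution

variable {α : Type*} [DecidableEq α] {X' : Finset α} {M' : Finset (Finset α)}

theorem hasInvolution_of_involutive (φ : Equiv.Perm α) (hφ : Function.Involutive φ)
    (hne : φ ≠ 1) (hfix : ∀ x, x ∉ X' → φ x = x) (hM : ∀ E ∈ M', E.image φ ∈ M') :
    HasInvolution X' M' := by
  refine ⟨φ, hne, Equiv.ext hφ, hfix, fun E => ⟨hM E, fun h => ?_⟩⟩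
  simpa [image_image, hφ.comp_self] using hM _ h

theorem image_swap_eq_self {a b : α} {E : Finset α} (h : a ∈ E ↔ b ∈ E) :
    E.image (Equiv.swap a b) = E := by
  ext y
  rw [← Equiv.coe_toEmbedding, ← map_eq_image, mem_map_equiv, Equiv.symm_swap,
    Equiv.swap_apply_def]
  split_ifs with hya hyb
  · subst hya; exact h.symm
  · subst hyb; exact h
  · rfl

theorem hasInvolution_swap {a b : α} (ha : a ∈ X') (hb : b ∈ X') (hab : a ≠ b)
    (hM : ∀ E ∈ M', (a ∈ E ↔ b ∈ E)) : HasInvolution X' M' :=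
  hasInvolution_of_involutive (Equiv.swap a b) (Equiv.swap_apply_self a b)
    (mt Equiv.swap_eq_one_iff.mp hab)
    (fun _ hx => Equiv.swap_apply_of_ne_of_ne (ne_of_mem_of_not_mem ha hx).symm
      (ne_of_mem_of_not_mem hb hx).symm)
    (fun E hE => by rwa [image_swap_eq_self (hM E hE)])

end Involution

namespace GStar

/-- The vertex `v_{i+1}` of `G*_k` is encoded as `i`, and `x` as `2k - 1`; thus `interval k i`
is the edge `M_{i+1}` and `starEdge k` is `M*`. -/
def interval (k i : ℕ) : Finset ℕ := Ico i (i + k)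

def intervals (k : ℕ) : Finset (Finset ℕ) := (range k).image (interval k)

def starEdge (k : ℕ) : Finset ℕ := insert (2 * k - 1) (insert (k + 1) (range (k - 2)))

theorem mem_interval {k i v : ℕ} : v ∈ interval k i ↔ i ≤ v ∧ v < i + k := mem_Ico

theorem mem_intervals {k : ℕ} {E : Finset ℕ} : E ∈ intervals k ↔ ∃ i < k, interval k i = E := by
  simp [intervals]

theorem mem_starEdge {k v : ℕ} : v ∈ starEdge k ↔ v = 2 * k - 1 ∨ v = k + 1 ∨ v < k - 2 := by
  simp [starEdge]

def reflect (k v : ℕ) : ℕ := if v ≤ 2 * k - 2 then 2 * k - 2 - v else v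

theorem reflect_involutive (k : ℕ) : Function.Involutive (reflect k) := by
  intro v
  unfold reflect
  split_ifs <;> omega

theorem image_reflect_interval {k i : ℕ} (hi : i < k) :
    (interval k i).image (reflect k) = interval k (k - 1 - i) := by
  ext a
  simp only [mem_image, mem_interval, reflect]
  constructor
  · rintro ⟨v, hv, rfl⟩
    rw [if_pos (by omega)]
    omega
  · intro ha
    exact ⟨2 * k - 2 - a, by omega, by rw [if_pos (by omega)]; omega⟩

variable {k : ℕ} {X' : Finset ℕ} {M' : Finset (Finset ℕ)}

theorem range_subset_of_forall_interval_mem (hE : ∀ E ∈ M', E ⊆ X')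
    (hall : ∀ i < k, interval k i ∈ M') : range (2 * k - 1) ⊆ X' := by
  intro v hv
  rw [mem_range] at hv
  obtain ⟨i, hi, hvi⟩ : ∃ i < k, v ∈ interval k i := by
    rcases lt_or_ge v k with h | h
    · exact ⟨0, by omega, mem_interval.mpr ⟨by omega, by omega⟩⟩
    · exact ⟨v - k + 1, by omega, mem_interval.mpr ⟨by omega, by omega⟩⟩
  exact hE _ (hall i hi) hvi

theorem eq_of_forall_interval_mem_of_starEdge_mem (hX : X' ⊆ range (2 * k))
    (hM : M' ⊆ intervals k ∪ {starEdge k}) (hE : ∀ E ∈ M', E ⊆ X')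
    (hall : ∀ i < k, interval k i ∈ M') (hstar : starEdge k ∈ M') :
    X' = range (2 * k) ∧ M' = intervals k ∪ {starEdge k} := by
  refine ⟨hX.antisymm fun v hv => ?_, hM.antisymm (union_subset ?_ (by simpa using hstar))⟩
  · rw [mem_range] at hv
    by_cases hvx : v = 2 * k - 1
    · exact hE _ hstar (mem_starEdge.mpr (Or.inl hvx))
    · exact range_subset_of_forall_interval_mem hE hall (mem_range.mpr (by omega))
  · intro E hE'
    obtain ⟨i, hi, rfl⟩ := mem_intervals.mp hE'
    exact hall i hi

theorem hasInvolution_swap_succ {S : Finset (Finset ℕ)} {v m : ℕ}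
    (hM : M' ⊆ intervals k ∪ S) (hS : ∀ E ∈ S, (v ∈ E ↔ v + 1 ∈ E))
    (hv : v ∈ X') (hv' : v + 1 ∈ X') (hm : m < k) (hmM : interval k m ∉ M')
    (hvm : v + 1 = m ∨ v + 1 = m + k) : HasInvolution X' M' := by
  refine hasInvolution_swap hv hv' (by omega) fun E hEM => ?_
  rcases mem_union.mp (hM hEM) with hE | hE
  · obtain ⟨i, hi, rfl⟩ := mem_intervals.mp hE
    have him : i ≠ m := fun h => hmM (h ▸ hEM)
    simp only [mem_interval]
    omega
  · exact hS E hE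

theorem hasInvolution_of_subset_intervals (hk : 2 ≤ k) (hM : M' ⊆ intervals k)
    (hE : ∀ E ∈ M', E ⊆ X') (hcard : 2 ≤ #X') : HasInvolution X' M' := by
  by_cases hall : ∀ i < k, interval k i ∈ M'
  · have hrange := range_subset_of_forall_interval_mem hE hall
    refine hasInvolution_of_involutive ((reflect_involutive k).toPerm _)
      (reflect_involutive k) (fun h => ?_) (fun x hx => ?_) (fun E hEM => ?_)
    · have h0 := congrArg (· 0) h
      simp only [Function.Involutive.coe_toPerm, reflect, Equiv.Perm.one_apply] at h0
      rw [if_pos (Nat.zero_le _)] at h0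
      omega
    · have : ¬ x < 2 * k - 1 := fun h => hx (hrange (mem_range.mpr h))
      simp only [Function.Involutive.coe_toPerm, reflect]
      rw [if_neg (by omega)]
    · obtain ⟨i, hi, rfl⟩ := mem_intervals.mp (hM hEM)
      rw [Function.Involutive.coe_toPerm, image_reflect_interval hi]
      exact hall _ (by omega)
  push Not at hall
  obtain ⟨j, hj, hjM⟩ := hall
  rcases M'.eq_empty_or_nonempty with rfl | ⟨E, hEM⟩
  · obtain ⟨a, ha, b, hb, hab⟩ := one_lt_card.mp hcard
    exact hasInvolution_swap ha hb hab (by simp)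
  obtain ⟨i₀, hi₀, rfl⟩ := mem_intervals.mp (hM hEM)
  have hM' : M' ⊆ intervals k ∪ ∅ := by rwa [union_empty]
  have hi₀j : i₀ ≠ j := fun h => hjM (h ▸ hEM)
  have hX (v : ℕ) (h₁ : i₀ ≤ v) (h₂ : v < i₀ + k) : v ∈ X' :=
    hE _ hEM (mem_interval.mpr ⟨h₁, h₂⟩)
  rcases lt_or_gt_of_ne hi₀j with hlt | hgt
  · exact hasInvolution_swap_succ (v := j - 1) hM' (by simp)
      (hX _ (by omega) (by omega)) (hX _ (by omega) (by omega)) hj hjM (by omega)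
  · exact hasInvolution_swap_succ (v := j + k - 1) hM' (by simp)
      (hX _ (by omega) (by omega)) (hX _ (by omega) (by omega)) hj hjM (by omega)

/-- Each swapped pair lies in a surviving edge and either inside `M*` or disjoint from it. -/
theorem hasInvolution_of_starEdge_mem (hk : 5 ≤ k) (hM : M' ⊆ intervals k ∪ {starEdge k})
    (hE : ∀ E ∈ M', E ⊆ X') (hstar : starEdge k ∈ M') {j : ℕ} (hj : j < k)
    (hjM : interval k j ∉ M') : HasInvolution X' M' := by
  have hS {v : ℕ} (h : v ∈ starEdge k ↔ v + 1 ∈ starEdge k) :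
      ∀ E ∈ ({starEdge k} : Finset (Finset ℕ)), (v ∈ E ↔ v + 1 ∈ E) := by
    simpa using h
  by_cases hmid : ∃ m, 1 ≤ m ∧ m ≤ k - 3 ∧ interval k m ∉ M'
  · obtain ⟨m, hm₁, hm₃, hmM⟩ := hmid
    exact hasInvolution_swap_succ (v := m - 1) hM (hS (by simp only [mem_starEdge]; omega))
      (hE _ hstar (mem_starEdge.mpr (by omega))) (hE _ hstar (mem_starEdge.mpr (by omega)))
      (by omega) hmM (by omega)
  push Not at hmid
  have h₁ : interval k 1 ∈ M' := hmid 1 le_rfl (by omega)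
  by_cases h₀ : interval k 0 ∈ M'
  · by_cases hlast : interval k (k - 1) ∈ M'
    · have hj₀ : j ≠ 0 := fun h => hjM (h ▸ h₀)
      have hj_last : j ≠ k - 1 := fun h => hjM (h ▸ hlast)
      have hj_mid : ¬(1 ≤ j ∧ j ≤ k - 3) := fun h => hjM (hmid j h.1 h.2)
      obtain rfl : j = k - 2 := by omega
      exact hasInvolution_swap_succ (v := 2 * k - 3) hM
        (hS (by simp only [mem_starEdge]; omega))
        (hE _ hlast (mem_interval.mpr (by omega))) (hE _ hlast (mem_interval.mpr (by omega)))
        hj hjM (by omega)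
    · exact hasInvolution_swap_succ (v := k - 2) hM (hS (by simp only [mem_starEdge]; omega))
        (hE _ h₁ (mem_interval.mpr (by omega))) (hE _ h₁ (mem_interval.mpr (by omega)))
        (by omega) hlast (by omega)
  · exact hasInvolution_swap_succ (v := k - 1) hM (hS (by simp only [mem_starEdge]; omega))
      (hE _ h₁ (mem_interval.mpr (by omega))) (hE _ h₁ (mem_interval.mpr (by omega)))
      (by omega) h₀ (by omega)

end GStar

open GStar in
/-- For every k ≥ 6, every non-trivial sub-k-graph of G*_k with
at least two vertices has an involution (a non-identity automorphism whose
square is the identity). Vertices of G*_k are {0,...,2k-1} with x = 2k-1. -/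
theorem stmt_16 (k : ℕ) (hk : 6 ≤ k)
    (X' : Finset ℕ) (M' : Finset (Finset ℕ))
    (hX : X' ⊆ Finset.range (2 * k))
    (hMsub : M' ⊆ (Finset.range k).image (fun i => Finset.Ico i (i + k)) ∪
              {insert (2 * k - 1) (insert (k + 1) (Finset.range (k - 2)))})
    (hE : ∀ E ∈ M', E ⊆ X')
    (hcard : 2 ≤ X'.card)
    (hnontriv : ¬(X' = Finset.range (2 * k) ∧
      M' = (Finset.range k).image (fun i => Finset.Ico i (i + k)) ∪
            {insert (2 * k - 1) (insert (k + 1) (Finset.range (k - 2)))})) :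
    ∃ φ : Equiv.Perm ℕ, φ ≠ 1 ∧ φ * φ = 1 ∧
      (∀ x : ℕ, x ∉ X' → φ x = x) ∧
      ∀ E : Finset ℕ, E ∈ M' ↔ E.image ⇑φ ∈ M' := by
  have hM : M' ⊆ intervals k ∪ {starEdge k} := hMsub
  by_cases hstar : starEdge k ∈ M'
  · by_cases hall : ∀ i < k, interval k i ∈ M'
    · exact absurd (eq_of_forall_interval_mem_of_starEdge_mem hX hM hE hall hstar) hnontriv
    push Not at hall
    obtain ⟨j, hj, hjM⟩ := hall
    exact hasInvolution_of_starEdge_mem (by omega) hM hE hstar hj hjM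
  · refine hasInvolution_of_subset_intervals (k := k) (by omega) (fun E hEM => ?_) hE hcard
    exact (mem_union.mp (hM hEM)).resolve_right fun h => hstar (mem_singleton.mp h ▸ hEM)
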